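/- Let φ : X → X be continuously differentiable with φ(x + λe) = φ(x) for all λ ∈ ℝ and x ∈ X, let M_t denote the (local) flow of ẋ = φ(x), and let U ⊆ X be a convex open set. For x₀ ∈ U let t_U(x₀) be the exit time of the solution from U. Define α(U) = inf{β ∈ ℝ : ‖M_t(x) − M_t(y)‖_H ≤ e^{βt}‖x − y‖_H for all x, y ∈ U and all 0 ≤ t < t_U(x) ∧ t_U(y)}. Then α(U) = sup_{x ∈ U} h(Dφ(x)), where h(L) := −inf{⟨ν, L(z)⟩ + ⟨π, L(e−z)⟩ : ν, π extreme points of P(e), z extreme point of [0,e] with ⟨ν,z⟩ + ⟨π, e−z⟩ = 0}. -/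

import Mathlib

noncomputable section

/-- `M(x/y) = inf {t : ℝ | x ≤ t • y}`, where `x ≤ z` means `z - x ∈ C`. -/
def upSlope {X : Type*} [AddCommGroup X] [Module ℝ X] (C : Set X) (y x : X) : ℝ :=
  sInf {t : ℝ | t • y - x ∈ C}

/-- `m(x/y) = sup {t : ℝ | t • y ≤ x}`, where `x ≤ z` means `z - x ∈ C`. -/
def lowSlope {X : Type*} [AddCommGroup X] [Module ℝ X] (C : Set X) (y x : X) : ℝ :=
  sSup {t : ℝ | x - t • y ∈ C}

/-- Thompson's norm `‖x‖_T = max (M(x/e), -m(x/e))` with respect to the unit `e`. -/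
def thompsonNorm {X : Type*} [AddCommGroup X] [Module ℝ X] (C : Set X) (e x : X) : ℝ :=
  max (upSlope C e x) (-(lowSlope C e x))

/-- Hopf's oscillation seminorm `‖x‖_H = M(x/e) - m(x/e)` with respect to the unit `e`. -/
def hopfOsc {X : Type*} [AddCommGroup X] [Module ℝ X] (C : Set X) (e x : X) : ℝ :=
  upSlope C e x - lowSlope C e x

/-- The oscillation `ω(x/y) = M(x/y) - m(x/y)`. -/
def oscGen {X : Type*} [AddCommGroup X] [Module ℝ X] (C : Set X) (y x : X) : ℝ :=
  upSlope C y x - lowSlope C y x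

/-- Hilbert's projective metric `d_H(x,y) = log (M(x/y) / m(x/y))`. -/
def hilbertDist {X : Type*} [AddCommGroup X] [Module ℝ X] (C : Set X) (x y : X) : ℝ :=
  Real.log (upSlope C y x / lowSlope C y x)

/-- The dual cone `C⋆ = {μ ∈ X⋆ : ⟨μ,x⟩ ≥ 0 ∀ x ∈ C}` inside the topological dual. -/
def dualCone {X : Type*} [NormedAddCommGroup X] [NormedSpace ℝ X] (C : Set X) :
    Set (X →L[ℝ] ℝ) := {μ | ∀ x ∈ C, 0 ≤ μ x}

/-- The simplex `P(e) = {μ ∈ C⋆ : ⟨μ,e⟩ = 1}`. -/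
def simplexSet {X : Type*} [NormedAddCommGroup X] [NormedSpace ℝ X] (C : Set X) (e : X) :
    Set (X →L[ℝ] ℝ) := {μ | μ ∈ dualCone C ∧ μ e = 1}

/-- The dual norm of Thompson's norm. -/
def dualTNorm {X : Type*} [NormedAddCommGroup X] [NormedSpace ℝ X] (C : Set X) (e : X)
    (μ : X →L[ℝ] ℝ) : ℝ :=
  sSup {r : ℝ | ∃ x : X, thompsonNorm C e x ≤ 1 ∧ r = μ x}

/-- Disjointness `ν ⊥ π` of two elements of the simplex `P(e)`. -/
def disjointIn {X : Type*} [NormedAddCommGroup X] [NormedSpace ℝ X] (C : Set X) (e : X)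
    (ν π : X →L[ℝ] ℝ) : Prop :=
  ∀ μ ∈ simplexSet C e, μ - (2:ℝ)⁻¹ • ν ∈ dualCone C → μ - (2:ℝ)⁻¹ • π ∈ dualCone C →
    μ = (2:ℝ)⁻¹ • (ν + π)

/-- The order interval `[0,e] = {x : 0 ≤ x ≤ e}`. -/
def orderIntv {X : Type*} [AddCommGroup X] (C : Set X) (e : X) : Set X :=
  {x | x ∈ C ∧ e - x ∈ C}

/-- The operator (semi)norm of `T` with respect to Hopf's oscillation seminorms. -/
def opHNorm {X₁ : Type*} {X₂ : Type*} [NormedAddCommGroup X₁] [NormedSpace ℝ X₁]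
    [NormedAddCommGroup X₂] [NormedSpace ℝ X₂] (C₁ : Set X₁) (e₁ : X₁) (C₂ : Set X₂) (e₂ : X₂)
    (T : X₁ →L[ℝ] X₂) : ℝ :=
  sSup {r : ℝ | ∃ z : X₁, hopfOsc C₁ e₁ z ≤ 1 ∧ r = hopfOsc C₂ e₂ (T z)}

/-- `C` is a closed pointed convex cone. -/
def IsCPCone {X : Type*} [NormedAddCommGroup X] [NormedSpace ℝ X] (C : Set X) : Prop :=
  IsClosed C ∧ (∀ x ∈ C, ∀ y ∈ C, x + y ∈ C) ∧ (∀ t : ℝ, 0 ≤ t → ∀ x ∈ C, t • x ∈ C) ∧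
    (∀ x ∈ C, -x ∈ C → x = 0)

/-- `C` is a normal cone: `0 ≤ x ≤ y` implies `‖x‖ ≤ K ‖y‖` for some `K > 0`. -/
def IsNormalCone {X : Type*} [NormedAddCommGroup X] [NormedSpace ℝ X] (C : Set X) : Prop :=
  ∃ K > (0:ℝ), ∀ x y : X, x ∈ C → y - x ∈ C → ‖x‖ ≤ K * ‖y‖

/-- The contraction rate `h(L)` of the linear flow `ẋ = L(x)` in Hopf's oscillation seminorm. -/
def hFun {X : Type*} [NormedAddCommGroup X] [NormedSpace ℝ X] (C : Set X) (e : X)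
    (L : X →L[ℝ] X) : ℝ :=
  - sInf {r : ℝ | ∃ ν ∈ Set.extremePoints ℝ (simplexSet C e),
      ∃ π ∈ Set.extremePoints ℝ (simplexSet C e),
      ∃ x ∈ Set.extremePoints ℝ (orderIntv C e),
        ν x + π (e - x) = 0 ∧ r = ν (L x) + π (L (e - x))}

end

open scoped ENNReal

/-!
Write `‖v‖_H = max {(ν - π) v : ν, π ∈ P(e)}`; the maximum is attained because `P(e)` is
compact. If `(ν, π)` attains it at `v` and `‖v‖_H > 0`, then `z = (v - m(v/e) e) / ‖v‖_H` lies
in `[0, e]` with `ν z = 1` and `π z = 0`, so `(ν, π, e - z)` is a disjoint triple. Minimizing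
the objective successively over `ν`, `π` and the point of `[0, e]` (each time over the face cut
out by the disjointness constraint) produces an *extreme* disjoint triple, whence
`(ν - π) (L v) ≤ h(L) ‖v‖_H` for every `L` with `L e = 0`.

Upper bound: by the mean value theorem along segments in `U`, the right difference quotients
of `t ↦ ‖M_t x - M_t y‖_H` are at most `sup h(Dφ)` times its value up to an error tending to
`0`, and Grönwall's inequality gives the contraction with rate `sup h(Dφ)`.

Lower bound: for an admissible rate `β`, a disjoint triple `(ν, π, x)`, `u = e - x` and
`x₀ ∈ U`, the pair `(ν, π)` attains `‖ε u‖_H = ε`; differentiating the contraction estimate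
for `M_t x₀` and `M_t (x₀ - ε u)` at `t = 0⁺`, and then in `ε` at `0⁺`, gives
`(ν - π) (Dφ(x₀) u) ≤ β`, i.e. `h(Dφ(x₀)) ≤ β`.

If `‖·‖_H` vanishes identically (`dim X ≤ 1`), every `β` is admissible and there are no
disjoint triples; both sides are then `0` by the conventions `sInf univ = sInf ∅ = sSup ∅ = 0`.
-/

open Set Metric Filter Topology

theorem Real.sInf_upperBounds (s : Set ℝ) : sInf (upperBounds s) = sSup s := by
  rcases s.eq_empty_or_nonempty with rfl | hne
  · rw [upperBounds_empty, Real.sInf_of_not_bddBelow not_bddBelow_univ, Real.sSup_empty]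
  by_cases hb : BddAbove s
  · exact csInf_upperBounds_eq_csSup hb hne
  · rw [Real.sSup_of_not_bddAbove hb, not_nonempty_iff_eq_empty.1 hb, Real.sInf_empty]

section Slopes

variable {X : Type*} [AddCommGroup X] [Module ℝ X] (C : Set X) (e v : X)

theorem upSlope_zero_left : upSlope C 0 v = 0 := by
  by_cases hv : -v ∈ C <;> simp [upSlope, hv]

theorem lowSlope_eq_neg_upSlope_neg : lowSlope C e v = -upSlope C e (-v) := by
  have h : {t : ℝ | t • e - -v ∈ C} = -{t : ℝ | v - t • e ∈ C} := by
    ext t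
    simp [add_comm]
  rw [upSlope, h, Real.sInf_neg, neg_neg, lowSlope]

end Slopes

theorem sub_mem_orderIntv {X : Type*} [AddCommGroup X] {C : Set X} {e x : X}
    (hx : x ∈ orderIntv C e) : e - x ∈ orderIntv C e :=
  ⟨hx.2, by simpa using hx.1⟩

namespace IsCPCone

variable {X : Type*} [NormedAddCommGroup X] [NormedSpace ℝ X] {C : Set X}

theorem add_mem (hC : IsCPCone C) {x y : X} (hx : x ∈ C) (hy : y ∈ C) : x + y ∈ C :=
  hC.2.1 x hx y hy

theorem smul_mem (hC : IsCPCone C) {t : ℝ} (ht : 0 ≤ t) {x : X} (hx : x ∈ C) : t • x ∈ C :=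
  hC.2.2.1 t ht x hx

theorem eq_zero_of_neg_mem (hC : IsCPCone C) {x : X} (hx : x ∈ C) (hx' : -x ∈ C) : x = 0 :=
  hC.2.2.2 x hx hx'

theorem zero_mem (hC : IsCPCone C) {x : X} (hx : x ∈ C) : (0 : X) ∈ C := by
  simpa using hC.smul_mem le_rfl hx

theorem convex (hC : IsCPCone C) : Convex ℝ C := fun _ hx _ hy _ _ ha hb _ =>
  hC.add_mem (hC.smul_mem ha hx) (hC.smul_mem hb hy)

end IsCPCone

section DualCone

variable {X : Type*} [NormedAddCommGroup X] [NormedSpace ℝ X] {C : Set X} {e : X}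

theorem apply_pos_of_mem_interior {μ : X →L[ℝ] ℝ} (hμ : μ ∈ dualCone C) (hμ0 : μ ≠ 0)
    (he : e ∈ interior C) : 0 < μ e := by
  refine (hμ e (interior_subset he)).lt_of_ne fun h => hμ0 ?_
  have hmin : IsLocalMin μ e := by
    filter_upwards [mem_interior_iff_mem_nhds.1 he] with y hy
    rw [← h]
    exact hμ y hy
  exact hmin.hasFDerivAt_eq_zero μ.hasFDerivAt

theorem exists_mem_simplexSet_apply_neg (hC : IsCPCone C) (he : e ∈ interior C) {q : X}
    (hq : q ∉ C) : ∃ ν ∈ simplexSet C e, ν q < 0 := by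
  obtain ⟨f, u, hfC, hfq⟩ := geometric_hahn_banach_closed_point hC.convex hC.1 hq
  have hu : 0 < u := by simpa using hfC 0 (hC.zero_mem (interior_subset he))
  -- `C` is a cone, so `f < u` on `C` forces `f ≤ 0` on `C`
  have hμ : -f ∈ dualCone C := by
    intro a ha
    by_contra! hfa
    rw [neg_apply, neg_neg_iff_pos] at hfa
    have := hfC ((u / f a) • a) (hC.smul_mem (div_nonneg hu.le hfa.le) ha)
    rw [map_smul, smul_eq_mul, div_mul_cancel₀ _ hfa.ne'] at this
    exact lt_irrefl _ this
  have hμq : (-f) q < 0 := by simp only [neg_apply]; linarith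
  have hμe := apply_pos_of_mem_interior hμ (by rintro h; simp [h] at hμq) he
  refine ⟨(-f e)⁻¹ • -f, ⟨fun a ha => ?_, ?_⟩, ?_⟩
  · exact mul_nonneg (inv_nonneg.2 hμe.le) (hμ a ha)
  · exact inv_mul_cancel₀ hμe.ne'
  · exact mul_neg_of_pos_of_neg (inv_pos.2 hμe) hμq

theorem norm_le_of_mem_simplexSet {r : ℝ} (hr : 0 < r) (hball : closedBall e r ⊆ C)
    {ν : X →L[ℝ] ℝ} (hν : ν ∈ simplexSet C e) : ‖ν‖ ≤ 1 / r := by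
  refine ν.opNorm_bound_of_ball_bound hr 1 fun z hz => ?_
  have hmem : ∀ w ∈ closedBall (0 : X) r, e - w ∈ C := fun w hw =>
    hball (by simpa [dist_eq_norm] using hw)
  have h₁ := hν.1 _ (hmem z hz)
  have h₂ := hν.1 _ (hmem (-z) (by simpa using hz))
  simp only [map_sub, map_neg, hν.2] at h₁ h₂
  rw [Real.norm_eq_abs, abs_le]
  constructor <;> linarith

theorem isBounded_simplexSet (he : e ∈ interior C) : Bornology.IsBounded (simplexSet C e) := by
  obtain ⟨r, hr, hball⟩ := nhds_basis_closedBall.mem_iff.1 (mem_interior_iff_mem_nhds.1 he)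
  exact (isBounded_closedBall (x := 0) (r := 1 / r)).subset fun ν hν =>
    mem_closedBall_zero_iff.2 (norm_le_of_mem_simplexSet hr hball hν)

theorem exists_forall_sub_apply_le_mul_norm (he : e ∈ interior C) :
    ∃ c, ∀ ν ∈ simplexSet C e, ∀ π ∈ simplexSet C e, ∀ v : X, (ν - π) v ≤ c * ‖v‖ := by
  obtain ⟨c, hc⟩ := (isBounded_simplexSet he).exists_norm_le
  refine ⟨c + c, fun ν hν π hπ v => ?_⟩
  calc (ν - π) v ≤ ‖ν - π‖ * ‖v‖ := le_of_abs_le ((ν - π).le_opNorm v)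
    _ ≤ (c + c) * ‖v‖ := by
      gcongr
      exact (norm_sub_le ν π).trans (add_le_add (hc ν hν) (hc π hπ))

theorem isClosed_simplexSet : IsClosed (simplexSet C e) := by
  have : simplexSet C e = (⋂ x ∈ C, {μ : X →L[ℝ] ℝ | 0 ≤ μ x}) ∩ {μ | μ e = 1} := by
    ext μ
    simp [simplexSet, dualCone]
  rw [this]
  exact (isClosed_biInter fun x _ => isClosed_le continuous_const (continuous_eval_const x)).inter
    (isClosed_eq (continuous_eval_const e) continuous_const)

theorem isClosed_orderIntv (hC : IsCPCone C) : IsClosed (orderIntv C e) :=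
  hC.1.inter (hC.1.preimage (continuous_const.sub continuous_id))

variable [FiniteDimensional ℝ X]

theorem isCompact_simplexSet (he : e ∈ interior C) : IsCompact (simplexSet C e) :=
  isCompact_of_isClosed_isBounded isClosed_simplexSet (isBounded_simplexSet he)

theorem exists_pos_le_infDist_neg (hC : IsCPCone C) :
    ∃ δ > 0, ∀ v ∈ C, ‖v‖ = 1 → δ ≤ infDist (-v) C := by
  have hcpt : IsCompact (C ∩ sphere 0 1) := (isCompact_sphere 0 1).inter_left hC.1
  obtain ⟨δ, hδ, h⟩ := hcpt.exists_forall_le' (a := 0)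
    ((continuous_infDist_pt C).comp continuous_neg).continuousOn fun v ⟨hv, hv1⟩ => by
      refine (hC.1.notMem_iff_infDist_pos ⟨v, hv⟩).1 fun hnv => ?_
      rw [mem_sphere_zero_iff_norm, hC.eq_zero_of_neg_mem hv hnv, norm_zero] at hv1
      exact zero_ne_one hv1
  exact ⟨δ, hδ, fun v hv hv1 => h v ⟨hv, mem_sphere_zero_iff_norm.2 hv1⟩⟩

theorem isBounded_orderIntv (hC : IsCPCone C) : Bornology.IsBounded (orderIntv C e) := by
  obtain ⟨δ, hδ, h⟩ := exists_pos_le_infDist_neg hC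
  refine (isBounded_closedBall (x := 0) (r := ‖e‖ / δ)).subset fun x ⟨hx, hex⟩ => ?_
  rw [mem_closedBall_zero_iff, le_div_iff₀ hδ]
  rcases eq_or_ne x 0 with rfl | hx0
  · simp
  have hpos : 0 < ‖x‖ := norm_pos_iff.2 hx0
  -- normalizing `0 ≤ x ≤ e` puts `-x / ‖x‖` within `‖e‖ / ‖x‖` of `C`
  have hdist : infDist (-(‖x‖⁻¹ • x)) C ≤ ‖x‖⁻¹ * ‖e‖ := by
    refine (infDist_le_dist_of_mem (hC.smul_mem (inv_nonneg.2 hpos.le) hex)).trans_eq ?_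
    rw [dist_eq_norm, show -(‖x‖⁻¹ • x) - ‖x‖⁻¹ • (e - x) = -(‖x‖⁻¹ • e) by module, norm_neg,
      norm_smul, Real.norm_eq_abs, abs_inv, abs_norm]
  have := (h _ (hC.smul_mem (inv_nonneg.2 hpos.le) hx) (norm_smul_inv_norm hx0)).trans hdist
  rw [inv_mul_eq_div, le_div_iff₀ hpos] at this
  linarith

theorem isCompact_orderIntv (hC : IsCPCone C) : IsCompact (orderIntv C e) :=
  isCompact_of_isClosed_isBounded (isClosed_orderIntv hC) (isBounded_orderIntv hC)

end DualCone

structure IsOrderUnit {X : Type*} [NormedAddCommGroup X] [NormedSpace ℝ X] (C : Set X) (e : X) :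
    Prop where
  isCPCone : IsCPCone C
  mem_interior : e ∈ interior C
  ne_zero : e ≠ 0

namespace IsOrderUnit

variable {X : Type*} [NormedAddCommGroup X] [NormedSpace ℝ X] {C : Set X} {e : X}
  (hu : IsOrderUnit C e)
include hu

theorem mem : e ∈ C := interior_subset hu.mem_interior

theorem simplexSet_nonempty : (simplexSet C e).Nonempty := by
  have : -e ∉ C := fun h => hu.ne_zero (hu.isCPCone.eq_zero_of_neg_mem hu.mem h)
  obtain ⟨ν, hν, -⟩ := exists_mem_simplexSet_apply_neg hu.isCPCone hu.mem_interior this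
  exact ⟨ν, hν⟩

theorem upSlope_le {v : X} {t : ℝ} (h : t • e - v ∈ C) : upSlope C e v ≤ t := by
  obtain ⟨ν, hν⟩ := hu.simplexSet_nonempty
  refine csInf_le ⟨ν v, fun s hs => ?_⟩ h
  have := hν.1 _ hs
  rw [map_sub, map_smul, hν.2, smul_eq_mul, mul_one] at this
  linarith

theorem upSlope_mem (v : X) : upSlope C e v • e - v ∈ C := by
  obtain ⟨ν, hν⟩ := hu.simplexSet_nonempty
  have hlim : Tendsto (fun t : ℝ => e - t⁻¹ • v) atTop (𝓝 e) := by
    simpa using tendsto_const_nhds.sub ((tendsto_inv_atTop_zero (𝕜 := ℝ)).smul_const v)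
  obtain ⟨t, ht, htC⟩ := ((hlim.eventually (mem_interior_iff_mem_nhds.1 hu.mem_interior)).and
    (eventually_gt_atTop 0)).exists
  refine (hu.isCPCone.1.preimage (f := fun t : ℝ => t • e - v) (by fun_prop)).csInf_mem
    ⟨t, ?_⟩ ⟨ν v, fun s hs => ?_⟩
  · simpa [smul_sub, smul_smul, htC.ne'] using hu.isCPCone.smul_mem htC.le ht
  · have := hν.1 _ hs
    rw [map_sub, map_smul, hν.2, smul_eq_mul, mul_one] at this
    linarith

theorem apply_le_upSlope {ν : X →L[ℝ] ℝ} (hν : ν ∈ simplexSet C e) (v : X) :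
    ν v ≤ upSlope C e v := by
  have := hν.1 _ (hu.upSlope_mem v)
  rw [map_sub, map_smul, hν.2, smul_eq_mul, mul_one] at this
  linarith

theorem le_lowSlope {v : X} {t : ℝ} (h : v - t • e ∈ C) : t ≤ lowSlope C e v := by
  rw [lowSlope_eq_neg_upSlope_neg, le_neg]
  exact hu.upSlope_le (by rwa [neg_smul, sub_neg_eq_add, add_comm, ← sub_eq_add_neg])

theorem lowSlope_mem (v : X) : v - lowSlope C e v • e ∈ C := by
  simpa [lowSlope_eq_neg_upSlope_neg, sub_eq_add_neg, add_comm] using hu.upSlope_mem (-v)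

theorem lowSlope_le_apply {ν : X →L[ℝ] ℝ} (hν : ν ∈ simplexSet C e) (v : X) :
    lowSlope C e v ≤ ν v := by
  simpa [lowSlope_eq_neg_upSlope_neg, neg_le] using hu.apply_le_upSlope hν (-v)

theorem sub_apply_le_hopfOsc {ν π : X →L[ℝ] ℝ} (hν : ν ∈ simplexSet C e)
    (hπ : π ∈ simplexSet C e) (v : X) : (ν - π) v ≤ hopfOsc C e v :=
  sub_le_sub (hu.apply_le_upSlope hν v) (hu.lowSlope_le_apply hπ v)

theorem hopfOsc_nonneg (v : X) : 0 ≤ hopfOsc C e v := by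
  obtain ⟨ν, hν⟩ := hu.simplexSet_nonempty
  simpa using hu.sub_apply_le_hopfOsc hν hν v

theorem hopfOsc_sub_hopfOsc_le {ν π : X →L[ℝ] ℝ} (hν : ν ∈ simplexSet C e)
    (hπ : π ∈ simplexSet C e) {v : X} (hv : (ν - π) v = hopfOsc C e v) (w : X) :
    hopfOsc C e v - hopfOsc C e w ≤ (ν - π) (v - w) := by
  rw [map_sub, hv]
  linarith [hu.sub_apply_le_hopfOsc hν hπ w]

theorem hopfOsc_smul_sub_le {x : X} (hx : x ∈ orderIntv C e) {ε : ℝ} (hε : 0 ≤ ε) :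
    hopfOsc C e (ε • (e - x)) ≤ ε := by
  have hup := hu.upSlope_le (v := ε • (e - x)) (t := ε)
    (by simpa [smul_sub] using hu.isCPCone.smul_mem hε hx.1)
  have hlow := hu.le_lowSlope (v := ε • (e - x)) (t := 0)
    (by simpa using hu.isCPCone.smul_mem hε hx.2)
  rw [hopfOsc]
  linarith

theorem eq_smul_of_hopfOsc_eq_zero {v : X} (hv : hopfOsc C e v = 0) :
    v = lowSlope C e v • e := by
  have hM : upSlope C e v = lowSlope C e v := sub_eq_zero.1 hv
  refine sub_eq_zero.1 (hu.isCPCone.eq_zero_of_neg_mem (hu.lowSlope_mem v) ?_)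
  simpa [← hM] using hu.upSlope_mem v

theorem exists_mem_orderIntv_of_sub_apply_eq_hopfOsc {ν π : X →L[ℝ] ℝ}
    (hν : ν ∈ simplexSet C e) (hπ : π ∈ simplexSet C e) {v : X}
    (hv : (ν - π) v = hopfOsc C e v) (ho : hopfOsc C e v ≠ 0) :
    ∃ z ∈ orderIntv C e, ν z = 1 ∧ π z = 0 ∧ v = lowSlope C e v • e + hopfOsc C e v • z := by
  have hup := hu.upSlope_mem v
  have hlow := hu.lowSlope_mem v
  have hνv := hu.apply_le_upSlope hν v
  have hπv := hu.lowSlope_le_apply hπ v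
  have ho₀ := hu.hopfOsc_nonneg v
  rw [sub_apply] at hv
  rw [show upSlope C e v = lowSlope C e v + hopfOsc C e v by simp [hopfOsc]] at hup hνv
  generalize hopfOsc C e v = o at *
  generalize lowSlope C e v = m at *
  refine ⟨o⁻¹ • (v - m • e), ⟨hu.isCPCone.smul_mem (inv_nonneg.2 ho₀) hlow, ?_⟩, ?_, ?_, ?_⟩
  · convert hu.isCPCone.smul_mem (inv_nonneg.2 ho₀) hup using 1
    match_scalars <;> field_simp
    ring
  · rw [map_smul, map_sub, map_smul, hν.2, smul_eq_mul, smul_eq_mul, mul_one,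
      show ν v = m + o by linarith]
    field_simp
    ring
  · rw [map_smul, map_sub, map_smul, hπ.2, smul_eq_mul, smul_eq_mul, show π v = m by linarith]
    ring
  · rw [smul_smul, mul_inv_cancel₀ ho, one_smul]
    abel

variable [FiniteDimensional ℝ X]

theorem exists_apply_eq_upSlope (v : X) : ∃ ν ∈ simplexSet C e, ν v = upSlope C e v := by
  obtain ⟨ν, hν, hmax⟩ := (isCompact_simplexSet hu.mem_interior).exists_isMaxOn
    hu.simplexSet_nonempty (continuous_eval_const v).continuousOn
  refine ⟨ν, hν, (hu.apply_le_upSlope hν v).antisymm ?_⟩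
  by_contra! hlt
  have : ν v • e - v ∉ C := fun h => (hu.upSlope_le h).not_gt hlt
  obtain ⟨μ, hμ, hμv⟩ := exists_mem_simplexSet_apply_neg hu.isCPCone hu.mem_interior this
  rw [map_sub, map_smul, hμ.2, smul_eq_mul, mul_one, sub_neg] at hμv
  exact (hmax hμ).not_gt hμv

theorem exists_sub_apply_eq_hopfOsc (v : X) :
    ∃ ν ∈ simplexSet C e, ∃ π ∈ simplexSet C e, (ν - π) v = hopfOsc C e v := by
  obtain ⟨ν, hν, hνv⟩ := hu.exists_apply_eq_upSlope v
  obtain ⟨π, hπ, hπv⟩ := hu.exists_apply_eq_upSlope (-v)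
  refine ⟨ν, hν, π, hπ, ?_⟩
  rw [map_neg] at hπv
  rw [hopfOsc, lowSlope_eq_neg_upSlope_neg, ← hπv, ← hνv, sub_apply, sub_neg_eq_add,
    sub_eq_add_neg]

theorem continuous_hopfOsc : Continuous (hopfOsc C e) := by
  obtain ⟨c, hc⟩ := exists_forall_sub_apply_le_mul_norm hu.mem_interior
  refine (LipschitzWith.of_le_add_mul' c fun v w => ?_).continuous
  obtain ⟨ν, hν, π, hπ, hv⟩ := hu.exists_sub_apply_eq_hopfOsc v
  have := (hu.hopfOsc_sub_hopfOsc_le hν hπ hv w).trans (hc ν hν π hπ (v - w))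
  rw [dist_eq_norm]
  linarith

end IsOrderUnit

section ExtremePoints

variable {E : Type*} [AddCommGroup E] [Module ℝ E]

theorem isExtreme_setOf_eq_of_le {A : Set E} (f : E →ₗ[ℝ] ℝ) {c : ℝ}
    (hf : ∀ a ∈ A, c ≤ f a) : IsExtreme ℝ A {a ∈ A | f a = c} := by
  refine ⟨sep_subset _ _, fun x hx y hy z ⟨_, hfz⟩ ⟨a, b, ha, hb, hab, hxyz⟩ => ⟨hx, ?_⟩⟩
  have hsum : a * (f x - c) + b * (f y - c) = 0 := by
    linear_combination (by rw [← hfz, ← hxyz]; simp : a * f x + b * f y = c) - c * hab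
  have h := (add_eq_zero_iff_of_nonneg (mul_nonneg ha.le (sub_nonneg.2 (hf x hx)))
    (mul_nonneg hb.le (sub_nonneg.2 (hf y hy)))).1 hsum
  exact sub_eq_zero.1 ((mul_eq_zero.1 h.1).resolve_left ha.ne')

variable [TopologicalSpace E] [T2Space E] [IsTopologicalAddGroup E] [ContinuousSMul ℝ E]
  [LocallyConvexSpace ℝ E]

theorem IsCompact.exists_mem_extremePoints_isMinOn {A : Set E} (hA : IsCompact A)
    (hne : A.Nonempty) (f : E →L[ℝ] ℝ) : ∃ p ∈ A.extremePoints ℝ, IsMinOn f A p := by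
  have hexp : IsExposed ℝ A {p ∈ A | ∀ q ∈ A, (-f) q ≤ (-f) p} := fun _ => ⟨-f, rfl⟩
  obtain ⟨q, hq, hmin⟩ := hA.exists_isMinOn hne f.continuous.continuousOn
  obtain ⟨p, hp⟩ := (hexp.isCompact hA).extremePoints_nonempty
    ⟨q, hq, fun r hr => neg_le_neg (hmin hr)⟩
  exact ⟨p, hexp.isExtreme.extremePoints_subset_extremePoints hp,
    fun r hr => neg_le_neg_iff.1 (hp.1.2 r hr)⟩

theorem IsCompact.exists_mem_extremePoints_eq_le {A : Set E} (hA : IsCompact A)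
    (g f : E →L[ℝ] ℝ) {c : ℝ} (hg : ∀ a ∈ A, c ≤ g a) {a₀ : E} (ha₀ : a₀ ∈ A) (hga₀ : g a₀ = c) :
    ∃ p ∈ A.extremePoints ℝ, g p = c ∧ f p ≤ f a₀ := by
  have hF : IsCompact {a ∈ A | g a = c} :=
    hA.inter_right (isClosed_eq g.continuous continuous_const)
  obtain ⟨p, hp, hmin⟩ := hF.exists_mem_extremePoints_isMinOn ⟨a₀, ha₀, hga₀⟩ f
  exact ⟨p, (isExtreme_setOf_eq_of_le g.toLinearMap hg).extremePoints_subset_extremePoints hp,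
    hp.1.2, hmin ⟨ha₀, hga₀⟩⟩

end ExtremePoints

section ContractionRate

variable {X : Type*} [NormedAddCommGroup X] [NormedSpace ℝ X] {C : Set X} {e : X}

def hFunSet (C : Set X) (e : X) (L : X →L[ℝ] X) : Set ℝ :=
  {r : ℝ | ∃ ν ∈ Set.extremePoints ℝ (simplexSet C e),
      ∃ π ∈ Set.extremePoints ℝ (simplexSet C e),
      ∃ x ∈ Set.extremePoints ℝ (orderIntv C e),
        ν x + π (e - x) = 0 ∧ r = ν (L x) + π (L (e - x))}

theorem hFun_eq_neg_sInf (C : Set X) (e : X) (L : X →L[ℝ] X) :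
    hFun C e L = -sInf (hFunSet C e L) := rfl

theorem hFunSet_eq_empty (hC : IsCPCone C) (he : e ∈ interior C) (h : ∀ v, hopfOsc C e v = 0)
    (L : X →L[ℝ] X) : hFunSet C e L = ∅ := by
  refine eq_empty_of_forall_notMem ?_
  rintro r ⟨ν, hν, π, hπ, x, hx, hdisj, -⟩
  have hu : IsOrderUnit C e := ⟨hC, he, fun h0 => by simpa [h0] using hν.1.2⟩
  have := hu.sub_apply_le_hopfOsc hν.1 hπ.1 (e - x)
  rw [h, sub_apply, map_sub, hν.1.2] at this
  linarith [hν.1.1 x hx.1.1, hπ.1.1 _ hx.1.2]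

variable [FiniteDimensional ℝ X]

theorem bddBelow_hFunSet (hC : IsCPCone C) (he : e ∈ interior C) (L : X →L[ℝ] X) :
    BddBelow (hFunSet C e L) := by
  have hP := isCompact_simplexSet he
  obtain ⟨b, hb⟩ := (hP.prod (hP.prod (isCompact_orderIntv hC))).bddBelow_image
    (f := fun p : (X →L[ℝ] ℝ) × (X →L[ℝ] ℝ) × X => p.1 (L p.2.2) + p.2.1 (L (e - p.2.2)))
    (by fun_prop)
  refine ⟨b, ?_⟩
  rintro r ⟨ν, hν, π, hπ, x, hx, -, rfl⟩
  exact hb ⟨(ν, π, x), ⟨hν.1, hπ.1, hx.1⟩, rfl⟩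

theorem exists_mem_hFunSet_le (hC : IsCPCone C) (he : e ∈ interior C) (L : X →L[ℝ] X)
    {ν π : X →L[ℝ] ℝ} {x : X} (hν : ν ∈ simplexSet C e) (hπ : π ∈ simplexSet C e)
    (hx : x ∈ orderIntv C e) (hdisj : ν x + π (e - x) = 0) :
    ∃ r ∈ hFunSet C e L, r ≤ ν (L x) + π (L (e - x)) := by
  have hνx : ν x = 0 := by linarith [hν.1 x hx.1, hπ.1 _ hx.2]
  have hπx : π (e - x) = 0 := by linarith [hν.1 x hx.1, hπ.1 _ hx.2]
  have hP := isCompact_simplexSet he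
  -- minimize over `ν`, then `π`, then `x`: each time the disjointness constraint cuts out a face,
  -- so the minimizer can be taken extreme
  obtain ⟨ν₁, hν₁, hν₁x, hν₁L⟩ := hP.exists_mem_extremePoints_eq_le
    (ContinuousLinearMap.apply ℝ ℝ x) (ContinuousLinearMap.apply ℝ ℝ (L x))
    (fun μ hμ => hμ.1 x hx.1) hν hνx
  obtain ⟨π₁, hπ₁, hπ₁x, hπ₁L⟩ := hP.exists_mem_extremePoints_eq_le
    (ContinuousLinearMap.apply ℝ ℝ (e - x)) (ContinuousLinearMap.apply ℝ ℝ (L (e - x)))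
    (fun μ hμ => hμ.1 _ hx.2) hπ hπx
  simp only [ContinuousLinearMap.apply_apply] at hν₁x hν₁L hπ₁x hπ₁L
  have hπ₁e : π₁ e = 1 := hπ₁.1.2
  -- on `[0, e]` we have `ν₁ - π₁ ≥ -1`, with equality exactly where `(ν₁, π₁, ·)` is disjoint
  obtain ⟨x₁, hx₁, hx₁eq, hx₁L⟩ := (isCompact_orderIntv hC).exists_mem_extremePoints_eq_le
    (ν₁ - π₁) (ν₁.comp L - π₁.comp L) (c := -1)
    (fun y hy => by
      have := π₁.map_sub e y
      simp only [sub_apply]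
      linarith [hν₁.1.1 y hy.1, hπ₁.1.1 _ hy.2])
    hx (by simp only [sub_apply]; linarith [π₁.map_sub e x])
  simp only [sub_apply, ContinuousLinearMap.comp_apply] at hx₁eq hx₁L
  refine ⟨_, ⟨ν₁, hν₁, π₁, hπ₁, x₁, hx₁, ?_, rfl⟩, ?_⟩
  · rw [map_sub, hπ₁e]
    linarith
  · simp only [map_sub] at hπ₁L ⊢
    linarith

theorem neg_hFun_le (hC : IsCPCone C) (he : e ∈ interior C) (L : X →L[ℝ] X)
    {ν π : X →L[ℝ] ℝ} {x : X} (hν : ν ∈ simplexSet C e) (hπ : π ∈ simplexSet C e)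
    (hx : x ∈ orderIntv C e) (hdisj : ν x + π (e - x) = 0) :
    -hFun C e L ≤ ν (L x) + π (L (e - x)) := by
  obtain ⟨r, hr, hle⟩ := exists_mem_hFunSet_le hC he L hν hπ hx hdisj
  rw [hFun_eq_neg_sInf, neg_neg]
  exact (csInf_le (bddBelow_hFunSet hC he L) hr).trans hle

theorem IsOrderUnit.sub_apply_le_hFun_mul_hopfOsc (hu : IsOrderUnit C e) {L : X →L[ℝ] X}
    (hL : L e = 0) {ν π : X →L[ℝ] ℝ} (hν : ν ∈ simplexSet C e) (hπ : π ∈ simplexSet C e)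
    {v : X} (hv : (ν - π) v = hopfOsc C e v) : (ν - π) (L v) ≤ hFun C e L * hopfOsc C e v := by
  by_cases ho : hopfOsc C e v = 0
  · rw [ho, mul_zero, hu.eq_smul_of_hopfOsc_eq_zero ho, map_smul, hL, smul_zero, map_zero]
  obtain ⟨z, hz, hνz, hπz, hvz⟩ := hu.exists_mem_orderIntv_of_sub_apply_eq_hopfOsc hν hπ hv ho
  have h := neg_hFun_le hu.isCPCone hu.mem_interior L hν hπ (sub_mem_orderIntv hz)
    (by rw [sub_sub_cancel, hπz, map_sub, hν.2, hνz]; ring)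
  rw [sub_sub_cancel, map_sub, hL, zero_sub, map_neg] at h
  calc (ν - π) (L v) = hopfOsc C e v * (ν - π) (L z) := by
        conv_lhs => rw [hvz]
        simp [hL]
    _ ≤ hopfOsc C e v * hFun C e L :=
        mul_le_mul_of_nonneg_left (by rw [sub_apply]; linarith) (hu.hopfOsc_nonneg v)
    _ = hFun C e L * hopfOsc C e v := mul_comm _ _

theorem IsOrderUnit.hFunSet_nonempty (hu : IsOrderUnit C e) (L : X →L[ℝ] X) {v : X}
    (hv : hopfOsc C e v ≠ 0) : (hFunSet C e L).Nonempty := by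
  obtain ⟨ν, hν, π, hπ, hνπ⟩ := hu.exists_sub_apply_eq_hopfOsc v
  obtain ⟨z, hz, hνz, hπz, -⟩ := hu.exists_mem_orderIntv_of_sub_apply_eq_hopfOsc hν hπ hνπ hv
  obtain ⟨r, hr, -⟩ := exists_mem_hFunSet_le hu.isCPCone hu.mem_interior L hν hπ
    (sub_mem_orderIntv hz) (by rw [sub_sub_cancel, hπz, map_sub, hν.2, hνz]; ring)
  exact ⟨r, hr⟩

end ContractionRate

section Calculus

theorem HasDerivAt.le_of_eventually_le_nhdsGT {f g : ℝ → ℝ} {f' g' a : ℝ}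
    (hf : HasDerivAt f f' a) (hg : HasDerivAt g g' a) (ha : f a = g a)
    (hfg : ∀ᶠ t in 𝓝[>] a, f t ≤ g t) : f' ≤ g' := by
  have h := (hasDerivAt_iff_tendsto_slope.1 (hg.sub hf)).mono_left
    (nhdsWithin_mono a (show Ioi a ⊆ {a}ᶜ from fun _ ht => ne_of_gt ht))
  refine sub_nonneg.1 (ge_of_tendsto h ?_)
  filter_upwards [hfg, self_mem_nhdsWithin] with t ht hta
  rw [slope_def_field, Pi.sub_apply, Pi.sub_apply, ha, sub_self, sub_zero]
  exact div_nonneg (sub_nonneg.2 ht) (sub_nonneg.2 (le_of_lt hta))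

theorem le_exp_mul_of_slope_le {f : ℝ → ℝ} {g : ℝ → ℝ → ℝ} {b T : ℝ} (hT : 0 ≤ T)
    (hf : ContinuousOn f (Icc 0 T)) (hg : ∀ t ∈ Ico 0 T, Tendsto (g t) (𝓝[>] t) (𝓝 (b * f t)))
    (hslope : ∀ t ∈ Ico 0 T, ∀ᶠ z in 𝓝[>] t, (z - t)⁻¹ * (f z - f t) ≤ g t z) :
    f T ≤ Real.exp (b * T) * f 0 := by
  have := le_gronwallBound_of_liminf_deriv_right_le hf
    (fun t ht r hr => (((hg t ht).eventually (gt_mem_nhds hr)).and (hslope t ht)).frequently.mono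
      fun z hz => hz.2.trans_lt hz.1)
    le_rfl (fun t _ => le_of_eq (add_zero _).symm) T ⟨hT, le_rfl⟩
  rwa [sub_zero, gronwallBound_ε0, mul_comm] at this

variable {X : Type*} [NormedAddCommGroup X] [NormedSpace ℝ X]

theorem fderiv_apply_eq_zero_of_add_smul_eq {Y : Type*} [NormedAddCommGroup Y] [NormedSpace ℝ Y]
    {φ : X → Y} {x e : X} (hφ : DifferentiableAt ℝ φ x) (hinv : ∀ l : ℝ, φ (x + l • e) = φ x) :
    fderiv ℝ φ x e = 0 := by
  have hline : HasDerivAt (fun l : ℝ => x + l • e) e 0 := by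
    simpa using ((hasDerivAt_id (0 : ℝ)).smul_const e).const_add x
  have h := (show HasFDerivAt φ (fderiv ℝ φ x) (x + (0 : ℝ) • e) by
    simpa using hφ.hasFDerivAt).comp_hasDerivAt (0 : ℝ) hline
  rw [show φ ∘ (fun l : ℝ => x + l • e) = fun _ => φ x from funext hinv] at h
  exact h.unique (hasDerivAt_const 0 (φ x))

theorem exists_pos_forall_hasDerivAt_mem [CompleteSpace X] {φ : X → X} {x : X}
    (hφ : ContDiffAt ℝ 1 φ x) {U : Set X} (hU : U ∈ 𝓝 x) :
    ∃ s : ℝ≥0∞, 0 < s ∧ ∃ γ : ℝ → X, γ 0 = x ∧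
      ∀ t : ℝ, 0 ≤ t → ENNReal.ofReal t < s → HasDerivAt γ (φ (γ t)) t ∧ γ t ∈ U := by
  obtain ⟨γ, hγ0, ε, hε, hγ⟩ := hφ.exists_forall_mem_closedBall_exists_eq_forall_mem_Ioo_hasDerivAt₀ 0
  have hγU : ∀ᶠ t in 𝓝 0, γ t ∈ U :=
    (hγ 0 (by simpa using hε)).continuousAt.preimage_mem_nhds (hγ0 ▸ hU)
  obtain ⟨δ, hδ, hδU⟩ := Metric.eventually_nhds_iff.1 (hγU.and (Ioo_mem_nhds (by simpa using hε)
    (by simpa using hε) : Ioo (0 - ε) (0 + ε) ∈ 𝓝 0))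
  refine ⟨ENNReal.ofReal δ, ENNReal.ofReal_pos.2 hδ, γ, hγ0, fun t ht htδ => ?_⟩
  have := hδU (y := t) (by
    rw [Real.dist_eq, sub_zero, abs_of_nonneg ht]
    exact ((ENNReal.ofReal_lt_ofReal_iff').1 htδ).1)
  exact ⟨hγ t this.2, this.1⟩

end Calculus

def IsContractionRate {X : Type*} [NormedAddCommGroup X] [NormedSpace ℝ X] (C : Set X) (e : X)
    (U : Set X) (M : ℝ → X → X) (τ : X → ℝ≥0∞) (β : ℝ) : Prop :=
  ∀ x ∈ U, ∀ y ∈ U, ∀ t : ℝ, 0 ≤ t → ENNReal.ofReal t < min (τ x) (τ y) →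
    hopfOsc C e (M t x - M t y) ≤ Real.exp (β * t) * hopfOsc C e (x - y)

namespace IsOrderUnit

variable {X : Type*} [NormedAddCommGroup X] [NormedSpace ℝ X] {C : Set X} {e : X}
  (hu : IsOrderUnit C e)
include hu

theorem sub_apply_le_of_eventually_hopfOsc_le {γ₁ γ₂ : ℝ → X} {d₁ d₂ : X}
    (h₁ : HasDerivAt γ₁ d₁ 0) (h₂ : HasDerivAt γ₂ d₂ 0) {β : ℝ}
    (hβ : ∀ᶠ t in 𝓝[>] 0,
      hopfOsc C e (γ₁ t - γ₂ t) ≤ Real.exp (β * t) * hopfOsc C e (γ₁ 0 - γ₂ 0))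
    {ν π : X →L[ℝ] ℝ} (hν : ν ∈ simplexSet C e) (hπ : π ∈ simplexSet C e)
    (h : (ν - π) (γ₁ 0 - γ₂ 0) = hopfOsc C e (γ₁ 0 - γ₂ 0)) :
    (ν - π) (d₁ - d₂) ≤ β * hopfOsc C e (γ₁ 0 - γ₂ 0) := by
  have hexp : HasDerivAt (fun t => Real.exp (β * t) * hopfOsc C e (γ₁ 0 - γ₂ 0))
      (β * hopfOsc C e (γ₁ 0 - γ₂ 0)) 0 := by
    simpa using (((hasDerivAt_id (0 : ℝ)).const_mul β).exp).mul_const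
      (hopfOsc C e (γ₁ 0 - γ₂ 0))
  refine ((ν - π).hasFDerivAt.comp_hasDerivAt 0 (h₁.sub h₂)).le_of_eventually_le_nhdsGT hexp
    (by simpa using h) ?_
  filter_upwards [hβ] with t ht
  exact (hu.sub_apply_le_hopfOsc hν hπ _).trans ht

theorem sub_apply_sub_le_of_isContractionRate {φ : X → X} {U : Set X} {M : ℝ → X → X}
    {τ : X → ℝ≥0∞} (hM0 : ∀ x ∈ U, M 0 x = x)
    (hMder : ∀ x ∈ U, HasDerivAt (fun s : ℝ => M s x) (φ x) 0) (hτ : ∀ x ∈ U, 0 < τ x)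
    {β : ℝ} (hβ : IsContractionRate C e U M τ β) {x y : X} (hx : x ∈ U) (hy : y ∈ U)
    {ν π : X →L[ℝ] ℝ} (hν : ν ∈ simplexSet C e) (hπ : π ∈ simplexSet C e)
    (hxy : (ν - π) (x - y) = hopfOsc C e (x - y)) :
    (ν - π) (φ x - φ y) ≤ β * hopfOsc C e (x - y) := by
  have hsmall : ∀ᶠ t in 𝓝[>] (0 : ℝ), ENNReal.ofReal t < min (τ x) (τ y) :=
    nhdsWithin_le_nhds ((ENNReal.continuous_ofReal.tendsto' 0 0 ENNReal.ofReal_zero).eventually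
      (gt_mem_nhds (lt_min (hτ x hx) (hτ y hy))))
  have := hu.sub_apply_le_of_eventually_hopfOsc_le (hMder x hx) (hMder y hy) (β := β)
    (by
      filter_upwards [hsmall, self_mem_nhdsWithin] with t ht ht0
      simpa [hM0 x hx, hM0 y hy] using hβ x hx y hy t (le_of_lt ht0) ht)
    hν hπ (by rwa [hM0 x hx, hM0 y hy])
  rwa [hM0 x hx, hM0 y hy] at this

theorem neg_le_of_isContractionRate {φ : X → X} (hφ : Differentiable ℝ φ)
    (hinv : ∀ (x : X) (l : ℝ), φ (x + l • e) = φ x) {U : Set X} (hU : IsOpen U)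
    {M : ℝ → X → X} {τ : X → ℝ≥0∞} (hM0 : ∀ x ∈ U, M 0 x = x)
    (hMder : ∀ x ∈ U, HasDerivAt (fun s : ℝ => M s x) (φ x) 0) (hτ : ∀ x ∈ U, 0 < τ x)
    {β : ℝ} (hβ : IsContractionRate C e U M τ β) {x₀ : X} (hx₀ : x₀ ∈ U)
    {ν π : X →L[ℝ] ℝ} {x : X} (hν : ν ∈ simplexSet C e) (hπ : π ∈ simplexSet C e)
    (hx : x ∈ orderIntv C e) (hdisj : ν x + π (e - x) = 0) :
    -(ν (fderiv ℝ φ x₀ x) + π (fderiv ℝ φ x₀ (e - x))) ≤ β := by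
  set L := fderiv ℝ φ x₀
  set u := e - x
  have hνu : ν u = 1 := by rw [map_sub, hν.2]; linarith [hν.1 x hx.1, hπ.1 _ hx.2]
  have hπu : π u = 0 := by linarith [hν.1 x hx.1, hπ.1 _ hx.2]
  have hLx : L x = -L u := by
    rw [map_sub, fderiv_apply_eq_zero_of_add_smul_eq (hφ x₀) (hinv x₀), zero_sub, neg_neg]
  rw [hLx, map_neg, show -(-ν (L u) + π (L u)) = (ν - π) (L u) by simp; ring]
  -- compare `ε ↦ (ν - π) (φ x₀ - φ (x₀ - ε • u))` with `ε ↦ β ε` at `ε = 0⁺`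
  have hline : HasDerivAt (fun ε : ℝ => x₀ - ε • u) (-u) 0 := by
    simpa using ((hasDerivAt_id (0 : ℝ)).smul_const u).const_sub x₀
  have hφline : HasDerivAt (fun ε : ℝ => (ν - π) (φ x₀ - φ (x₀ - ε • u))) ((ν - π) (L u)) 0 := by
    have := (hφ (x₀ - (0 : ℝ) • u)).hasFDerivAt.comp_hasDerivAt 0 hline
    simp only [zero_smul, sub_zero, map_neg] at this
    change HasDerivAt _ (-L u) 0 at this
    exact ((ν - π).hasFDerivAt.comp_hasDerivAt 0 (this.const_sub (φ x₀))).congr_deriv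
      (by rw [neg_neg])
  have hβline : HasDerivAt (fun ε : ℝ => β * ε) β 0 := by
    simpa using (hasDerivAt_id (0 : ℝ)).const_mul β
  refine hφline.le_of_eventually_le_nhdsGT hβline (by simp) ?_
  have hyU : ∀ᶠ ε in 𝓝[>] (0 : ℝ), x₀ - ε • u ∈ U := by
    refine nhdsWithin_le_nhds (hline.continuousAt.preimage_mem_nhds ?_)
    simpa using hU.mem_nhds hx₀
  filter_upwards [hyU, self_mem_nhdsWithin] with ε hy hε
  have hosc : hopfOsc C e (ε • u) = ε := by
    refine le_antisymm (hu.hopfOsc_smul_sub_le hx (le_of_lt hε)) ?_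
    simpa [hνu, hπu] using hu.sub_apply_le_hopfOsc hν hπ (ε • u)
  have := hu.sub_apply_sub_le_of_isContractionRate hM0 hMder hτ hβ hx₀ hy hν hπ
    (by rw [sub_sub_cancel, hosc]; simp [hνu, hπu])
  rwa [sub_sub_cancel, hosc] at this

variable [FiniteDimensional ℝ X]

theorem hFun_le_of_isContractionRate {w : X} (hw : hopfOsc C e w ≠ 0) {φ : X → X}
    (hφ : Differentiable ℝ φ) (hinv : ∀ (x : X) (l : ℝ), φ (x + l • e) = φ x) {U : Set X}
    (hU : IsOpen U) {M : ℝ → X → X} {τ : X → ℝ≥0∞} (hM0 : ∀ x ∈ U, M 0 x = x)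
    (hMder : ∀ x ∈ U, HasDerivAt (fun s : ℝ => M s x) (φ x) 0) (hτ : ∀ x ∈ U, 0 < τ x)
    {β : ℝ} (hβ : IsContractionRate C e U M τ β) {x₀ : X} (hx₀ : x₀ ∈ U) :
    hFun C e (fderiv ℝ φ x₀) ≤ β := by
  rw [hFun_eq_neg_sInf, neg_le]
  refine le_csInf (hu.hFunSet_nonempty _ hw) ?_
  rintro r ⟨ν, hν, π, hπ, x, hx, hdisj, rfl⟩
  exact neg_le.1 (hu.neg_le_of_isContractionRate hφ hinv hU hM0 hMder hτ hβ hx₀ hν.1 hπ.1 hx.1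
    hdisj)

theorem sub_apply_sub_le_mul_hopfOsc {φ : X → X} (hφ : Differentiable ℝ φ)
    (hinv : ∀ (x : X) (l : ℝ), φ (x + l • e) = φ x) {U : Set X} (hU : Convex ℝ U) {b : ℝ}
    (hb : ∀ x ∈ U, hFun C e (fderiv ℝ φ x) ≤ b) {p q : X} (hp : p ∈ U) (hq : q ∈ U)
    {ν π : X →L[ℝ] ℝ} (hν : ν ∈ simplexSet C e) (hπ : π ∈ simplexSet C e)
    (hpq : (ν - π) (p - q) = hopfOsc C e (p - q)) :
    (ν - π) (φ p - φ q) ≤ b * hopfOsc C e (p - q) := by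
  have hline : ∀ s : ℝ, HasDerivAt (fun s : ℝ => q + s • (p - q)) (p - q) s := fun s => by
    simpa using ((hasDerivAt_id s).smul_const (p - q)).const_add q
  have hg : ∀ s : ℝ, HasDerivAt (fun s : ℝ => (ν - π) (φ (q + s • (p - q))))
      ((ν - π) (fderiv ℝ φ (q + s • (p - q)) (p - q))) s := fun s =>
    (ν - π).hasFDerivAt.comp_hasDerivAt s ((hφ _).hasFDerivAt.comp_hasDerivAt s (hline s))
  obtain ⟨c, hc, hgc⟩ := exists_hasDerivAt_eq_slope _ _ zero_lt_one
    (fun s _ => (hg s).continuousAt.continuousWithinAt) fun s _ => hg s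
  simp only [one_smul, zero_smul, add_zero, add_sub_cancel, sub_zero, div_one] at hgc
  have hmem : q + c • (p - q) ∈ U := hU.add_smul_sub_mem hq hp ⟨hc.1.le, hc.2.le⟩
  rw [map_sub, ← hgc]
  exact (hu.sub_apply_le_hFun_mul_hopfOsc (fderiv_apply_eq_zero_of_add_smul_eq (hφ _)
    (hinv _)) hν hπ hpq).trans (mul_le_mul_of_nonneg_right (hb _ hmem) (hu.hopfOsc_nonneg _))

theorem hopfOsc_sub_le_exp_mul {φ : X → X} (hφ : Differentiable ℝ φ)
    (hinv : ∀ (x : X) (l : ℝ), φ (x + l • e) = φ x) {U : Set X} (hU : Convex ℝ U) {b : ℝ}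
    (hb : ∀ x ∈ U, hFun C e (fderiv ℝ φ x) ≤ b) {γ₁ γ₂ : ℝ → X} {T : ℝ} (hT : 0 ≤ T)
    (hγ₁ : ∀ t ∈ Icc 0 T, HasDerivAt γ₁ (φ (γ₁ t)) t ∧ γ₁ t ∈ U)
    (hγ₂ : ∀ t ∈ Icc 0 T, HasDerivAt γ₂ (φ (γ₂ t)) t ∧ γ₂ t ∈ U) :
    hopfOsc C e (γ₁ T - γ₂ T) ≤ Real.exp (b * T) * hopfOsc C e (γ₁ 0 - γ₂ 0) := by
  obtain ⟨c, hc⟩ := exists_forall_sub_apply_le_mul_norm hu.mem_interior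
  set w : ℝ → X := fun t => γ₁ t - γ₂ t
  set B : ℝ → X := fun t => φ (γ₁ t) - φ (γ₂ t)
  have hw : ∀ t ∈ Icc 0 T, HasDerivAt w (B t) t := fun t ht => (hγ₁ t ht).1.sub (hγ₂ t ht).1
  have hf : ∀ t ∈ Icc 0 T, ContinuousAt (fun t => hopfOsc C e (w t)) t := fun t ht =>
    hu.continuous_hopfOsc.continuousAt.comp (hw t ht).continuousAt
  -- the error term `c ‖slope w t z - B z‖` tends to `0` as `z → t⁺`
  refine le_exp_mul_of_slope_le hT (fun t ht => (hf t ht).continuousWithinAt)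
    (g := fun t z => b * hopfOsc C e (w z) + c * ‖slope w t z - B z‖) (fun t ht => ?_)
    fun t ht => ?_
  · have ht' : t ∈ Icc 0 T := Ico_subset_Icc_self ht
    have hslope := (hasDerivAt_iff_tendsto_slope.1 (hw t ht')).mono_left
      (nhdsWithin_mono t (show Ioi t ⊆ {t}ᶜ from fun _ hz => ne_of_gt hz))
    have hB : ContinuousWithinAt B (Ioi t) t :=
      ((hφ.continuous.continuousAt.comp (hγ₁ t ht').1.continuousAt).sub
        (hφ.continuous.continuousAt.comp (hγ₂ t ht').1.continuousAt)).continuousWithinAt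
    simpa using (((hf t ht').continuousWithinAt (s := Ioi t)).tendsto.const_mul b).add
      (((hslope.sub hB).norm).const_mul c)
  filter_upwards [Ioc_mem_nhdsGT ht.2] with z hz
  have hz' : z ∈ Icc 0 T := ⟨ht.1.trans hz.1.le, hz.2⟩
  obtain ⟨ν, hν, π, hπ, hνπ⟩ := hu.exists_sub_apply_eq_hopfOsc (w z)
  calc (z - t)⁻¹ * (hopfOsc C e (w z) - hopfOsc C e (w t))
      ≤ (z - t)⁻¹ * (ν - π) (w z - w t) := mul_le_mul_of_nonneg_left
        (hu.hopfOsc_sub_hopfOsc_le hν hπ hνπ (w t)) (inv_nonneg.2 (sub_nonneg.2 hz.1.le))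
    _ = (ν - π) (B z) + (ν - π) (slope w t z - B z) := by
        rw [← map_add, add_sub_cancel, slope_def_module, map_smul, smul_eq_mul]
    _ ≤ b * hopfOsc C e (w z) + c * ‖slope w t z - B z‖ := add_le_add
        (hu.sub_apply_sub_le_mul_hopfOsc hφ hinv hU hb (hγ₁ z hz').2 (hγ₂ z hz').2 hν hπ hνπ)
        (hc ν hν π hπ _)

theorem isContractionRate_of_hFun_le {φ : X → X} (hφ : Differentiable ℝ φ)
    (hinv : ∀ (x : X) (l : ℝ), φ (x + l • e) = φ x) {U : Set X} (hU : Convex ℝ U)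
    {M : ℝ → X → X} {τ : X → ℝ≥0∞} (hM0 : ∀ x ∈ U, M 0 x = x)
    (hMder : ∀ x ∈ U, ∀ t : ℝ, 0 ≤ t → ENNReal.ofReal t < τ x →
        HasDerivAt (fun s : ℝ => M s x) (φ (M t x)) t)
    (hMmem : ∀ x ∈ U, ∀ t : ℝ, 0 ≤ t → ENNReal.ofReal t < τ x → M t x ∈ U)
    {b : ℝ} (hb : ∀ x ∈ U, hFun C e (fderiv ℝ φ x) ≤ b) : IsContractionRate C e U M τ b := by
  intro x hx y hy t ht htτ
  have hsol : ∀ z ∈ U, ENNReal.ofReal t < τ z →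
      ∀ s ∈ Icc 0 t, HasDerivAt (fun s : ℝ => M s z) (φ (M s z)) s ∧ M s z ∈ U :=
    fun z hz hzt s hs =>
      have hsz := (ENNReal.ofReal_le_ofReal hs.2).trans_lt hzt
      ⟨hMder z hz s hs.1 hsz, hMmem z hz s hs.1 hsz⟩
  simpa [hM0 x hx, hM0 y hy] using hu.hopfOsc_sub_le_exp_mul hφ hinv hU hb ht
    (hsol x hx (htτ.trans_le (min_le_left _ _))) (hsol y hy (htτ.trans_le (min_le_right _ _)))

end IsOrderUnit

theorem nonlinear_flow_hopf_contraction_rate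
    {X : Type*} [NormedAddCommGroup X] [NormedSpace ℝ X] [FiniteDimensional ℝ X]
    (C : Set X) (e : X) (hC : IsCPCone C) (he : e ∈ interior C)
    (φ : X → X) (hφ : ContDiff ℝ 1 φ)
    (hinv : ∀ (x : X) (l : ℝ), φ (x + l • e) = φ x)
    (U : Set X) (hUopen : IsOpen U) (hUconv : Convex ℝ U)
    (M : ℝ → X → X) (τ : X → ℝ≥0∞)
    (hM0 : ∀ x ∈ U, M 0 x = x)
    (hMder : ∀ x ∈ U, ∀ t : ℝ, 0 ≤ t → ENNReal.ofReal t < τ x →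
        HasDerivAt (fun s : ℝ => M s x) (φ (M t x)) t)
    (hMmem : ∀ x ∈ U, ∀ t : ℝ, 0 ≤ t → ENNReal.ofReal t < τ x → M t x ∈ U)
    (hτmax : ∀ x ∈ U, ∀ (γ : ℝ → X) (s : ℝ≥0∞), γ 0 = x →
        (∀ t : ℝ, 0 ≤ t → ENNReal.ofReal t < s → HasDerivAt γ (φ (γ t)) t ∧ γ t ∈ U) →
        s ≤ τ x) :
    sInf {β : ℝ | ∀ x ∈ U, ∀ y ∈ U, ∀ t : ℝ, 0 ≤ t → ENNReal.ofReal t < min (τ x) (τ y) →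
        hopfOsc C e (M t x - M t y) ≤ Real.exp (β * t) * hopfOsc C e (x - y)} =
      sSup {r : ℝ | ∃ x ∈ U, r = hFun C e (fderiv ℝ φ x)} := by
  change sInf {β | IsContractionRate C e U M τ β} = _
  by_cases hdeg : ∀ v, hopfOsc C e v = 0
  · have hR : {r : ℝ | ∃ x ∈ U, r = hFun C e (fderiv ℝ φ x)} ⊆ {0} := by
      rintro r ⟨x, -, rfl⟩
      simp [hFun_eq_neg_sInf, hFunSet_eq_empty hC he hdeg]
    rw [eq_univ_of_forall (s := {β | IsContractionRate C e U M τ β})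
      fun β x _ y _ t _ _ => by simp [hdeg], Real.sInf_of_not_bddBelow not_bddBelow_univ]
    rcases subset_singleton_iff_eq.1 hR with hR | hR <;> simp [hR]
  obtain ⟨w, hw⟩ := not_forall.1 hdeg
  have hu : IsOrderUnit C e := ⟨hC, he, by
    rintro rfl
    simp [hopfOsc, upSlope_zero_left, lowSlope_eq_neg_upSlope_neg] at hw⟩
  have hτ : ∀ x ∈ U, 0 < τ x := fun x hx => by
    obtain ⟨s, hs, γ, hγ0, hγ⟩ :=
      exists_pos_forall_hasDerivAt_mem hφ.contDiffAt (hUopen.mem_nhds hx)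
    exact hs.trans_le (hτmax x hx γ s hγ0 hγ)
  have hMder₀ : ∀ x ∈ U, HasDerivAt (fun s : ℝ => M s x) (φ x) 0 := fun x hx => by
    simpa [hM0 x hx] using hMder x hx 0 le_rfl (by simpa using hτ x hx)
  have hφ' : Differentiable ℝ φ := hφ.differentiable one_ne_zero
  have hS : {β | IsContractionRate C e U M τ β} =
      upperBounds {r : ℝ | ∃ x ∈ U, r = hFun C e (fderiv ℝ φ x)} := by
    ext β
    refine ⟨fun hβ => ?_, fun hβ => hu.isContractionRate_of_hFun_le hφ' hinv hUconv hM0 hMder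
      hMmem fun x hx => hβ ⟨x, hx, rfl⟩⟩
    rintro r ⟨x, hx, rfl⟩
    exact hu.hFun_le_of_isContractionRate hw hφ' hinv hUopen hM0 hMder₀ hτ hβ hx
  rw [hS, Real.sInf_upperBounds]
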